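/- arXiv:2503.12223 — 2 statements merged into one kernel-verified Lean document; each statement's English description precedes it below -/
import Mathlib

section
/- Let P1 and P2 be non-empty finite posets such that P1 has no greatest element and P2 has no least element. Then sat*(n, P2 * P1) ≥ sat*(n, P2 * • * P1) for every n. -/
open Finset Filter

/-- An induced copy of the poset `α` inside the family `𝒜` of subsets of `Fin n`
(representing `[n] = {1,…,n}`): an injective map `f : α → Finset (Fin n)` with image
contained in `𝒜` such that `a ≤ b ↔ f a ⊆ f b`. -/
def IsInducedCopy {α : Type*} [PartialOrder α] {n : ℕ}
    (𝒜 : Finset (Finset (Fin n))) (f : α → Finset (Fin n)) : Prop :=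
  Function.Injective f ∧ (∀ a, f a ∈ 𝒜) ∧ ∀ a b : α, a ≤ b ↔ f a ⊆ f b

/-- The family `𝒜` contains an induced copy of the poset `α`. -/
def ContainsCopy (α : Type*) [PartialOrder α] {n : ℕ}
    (𝒜 : Finset (Finset (Fin n))) : Prop :=
  ∃ f : α → Finset (Fin n), IsInducedCopy 𝒜 f

/-- `𝒜` is an `α`-saturated family: it contains no induced copy of `α`, but adding any
set not in `𝒜` creates an induced copy of `α`. -/
def IsSaturatedFamily (α : Type*) [PartialOrder α] {n : ℕ}
    (𝒜 : Finset (Finset (Fin n))) : Prop :=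
  ¬ ContainsCopy α 𝒜 ∧
    ∀ S : Finset (Fin n), S ∉ 𝒜 → ContainsCopy α (insert S 𝒜)

/-- The induced saturation number `sat*(n, α)`: the minimum size of an `α`-saturated
family of subsets of `[n]`. -/
noncomputable def satStar (α : Type*) [PartialOrder α] (n : ℕ) : ℕ :=
  sInf {k : ℕ | ∃ 𝒜 : Finset (Finset (Fin n)), IsSaturatedFamily α 𝒜 ∧ 𝒜.card = k}

/- ### Auxiliary machinery -/

/-- A "pair copy": the data of an induced copy of `P1 ⊕ₗ P2`, separated into the two
parts, without the membership requirements. -/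
structure PairCopy {P1 P2 : Type*} [PartialOrder P1] [PartialOrder P2] {n : ℕ}
    (u : P1 → Finset (Fin n)) (v : P2 → Finset (Fin n)) : Prop where
  inj_u : Function.Injective u
  inj_v : Function.Injective v
  ne : ∀ p q, u p ≠ v q
  iff_u : ∀ p p', p ≤ p' ↔ u p ⊆ u p'
  iff_v : ∀ q q', q ≤ q' ↔ v q ⊆ v q'
  le : ∀ p q, u p ⊆ v q
  nle : ∀ p q, ¬ v q ⊆ u p

section Aux

variable {P1 P2 : Type*} [PartialOrder P1] [PartialOrder P2] {n : ℕ}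

lemma pair_of_copyQ (𝒜 : Finset (Finset (Fin n))) (h : ContainsCopy (P1 ⊕ₗ P2) 𝒜) :
    ∃ (u : P1 → Finset (Fin n)) (v : P2 → Finset (Fin n)),
      PairCopy u v ∧ (∀ p, u p ∈ 𝒜) ∧ ∀ q, v q ∈ 𝒜 := by
  obtain ⟨f, hinj, hmem, hord⟩ := h
  refine ⟨fun p => f (toLex (Sum.inl p)), fun q => f (toLex (Sum.inr q)),
    ⟨?_, ?_, ?_, ?_, ?_, ?_, ?_⟩, fun p => hmem _, fun q => hmem _⟩
  · intro p p' h
    have := toLex.injective (hinj h)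
    exact Sum.inl_injective this
  · intro q q' h
    have := toLex.injective (hinj h)
    exact Sum.inr_injective this
  · intro p q h
    exact Sum.inl_ne_inr (toLex.injective (hinj h))
  · intro p p'
    exact Sum.Lex.inl_le_inl_iff.symm.trans (hord _ _)
  · intro q q'
    exact Sum.Lex.inr_le_inr_iff.symm.trans (hord _ _)
  · intro p q
    exact (hord _ _).1 (Sum.Lex.inl_le_inr _ _)
  · intro p q h
    exact Sum.Lex.not_inr_le_inl ((hord _ _).2 h)

lemma copyQ_of_pair {u : P1 → Finset (Fin n)} {v : P2 → Finset (Fin n)}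
    (pc : PairCopy u v) (𝒜 : Finset (Finset (Fin n)))
    (hu : ∀ p, u p ∈ 𝒜) (hv : ∀ q, v q ∈ 𝒜) :
    ContainsCopy (P1 ⊕ₗ P2) 𝒜 := by
  refine ⟨fun x => Sum.elim u v (ofLex x), ?_, ?_, ?_⟩
  · rintro (p | q) (p' | q') h
    · exact congrArg (fun z => toLex (Sum.inl z)) (pc.inj_u h)
    · exact (pc.ne p q' h).elim
    · exact (pc.ne p' q h.symm).elim
    · exact congrArg (fun z => toLex (Sum.inr z)) (pc.inj_v h)
  · rintro (p | q)
    · exact hu p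
    · exact hv q
  · rintro (p | q) (p' | q')
    · exact Sum.Lex.inl_le_inl_iff.trans (pc.iff_u p p')
    · exact iff_of_true (Sum.Lex.inl_le_inr _ _) (pc.le p q')
    · exact iff_of_false Sum.Lex.not_inr_le_inl (pc.nle p' q)
    · exact Sum.Lex.inr_le_inr_iff.trans (pc.iff_v q q')

lemma pair_of_copyR (𝒜 : Finset (Finset (Fin n)))
    (h : ContainsCopy (P1 ⊕ₗ Unit ⊕ₗ P2) 𝒜) :
    ∃ (u : P1 → Finset (Fin n)) (v : P2 → Finset (Fin n)),
      PairCopy u v ∧ (∀ p, u p ∈ 𝒜) ∧ ∀ q, v q ∈ 𝒜 := by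
  obtain ⟨f, hinj, hmem, hord⟩ := h
  refine ⟨fun p => f (toLex (Sum.inl p)),
    fun q => f (toLex (Sum.inr (toLex (Sum.inr q)))),
    ⟨?_, ?_, ?_, ?_, ?_, ?_, ?_⟩, fun p => hmem _, fun q => hmem _⟩
  · intro p p' h
    exact Sum.inl_injective (toLex.injective (hinj h))
  · intro q q' h
    exact Sum.inr_injective (toLex.injective
      (Sum.inr_injective (toLex.injective (hinj h))))
  · intro p q h
    exact Sum.inl_ne_inr (toLex.injective (hinj h))
  · intro p p'
    exact Sum.Lex.inl_le_inl_iff.symm.trans (hord _ _)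
  · intro q q'
    exact (Sum.Lex.inr_le_inr_iff.trans Sum.Lex.inr_le_inr_iff).symm.trans (hord _ _)
  · intro p q
    exact (hord _ _).1 (Sum.Lex.inl_le_inr _ _)
  · intro p q h
    exact Sum.Lex.not_inr_le_inl ((hord _ _).2 h)

lemma copyQ_of_copyR (𝒜 : Finset (Finset (Fin n)))
    (h : ContainsCopy (P1 ⊕ₗ Unit ⊕ₗ P2) 𝒜) : ContainsCopy (P1 ⊕ₗ P2) 𝒜 := by
  obtain ⟨u, v, pc, hu, hv⟩ := pair_of_copyR 𝒜 h
  exact copyQ_of_pair pc 𝒜 hu hv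

/-- The "middle lemma": a pair copy together with a set `X` in the family squeezed
between all the bottom sets and all the top sets yields an induced copy of
`P1 ⊕ₗ Unit ⊕ₗ P2`. Uses that `P1` has no top and `P2` has no bottom. -/
lemma mid_copy (h1 : ¬ ∃ m : P1, IsTop m) (h2 : ¬ ∃ m : P2, IsBot m)
    {u : P1 → Finset (Fin n)} {v : P2 → Finset (Fin n)} (pc : PairCopy u v)
    (𝒜 : Finset (Finset (Fin n))) (hu : ∀ p, u p ∈ 𝒜) (hv : ∀ q, v q ∈ 𝒜)
    {X : Finset (Fin n)} (hX : X ∈ 𝒜) (hXu : ∀ p, u p ⊆ X) (hXv : ∀ q, X ⊆ v q) :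
    ContainsCopy (P1 ⊕ₗ Unit ⊕ₗ P2) 𝒜 := by
  have hXu' : ∀ p, ¬ X ⊆ u p := fun p h =>
    h1 ⟨p, fun p' => (pc.iff_u p' p).2 ((hXu p').trans h)⟩
  have hXv' : ∀ q, ¬ v q ⊆ X := fun q h =>
    h2 ⟨q, fun q' => (pc.iff_v q q').2 (h.trans (hXv q'))⟩
  have hXune : ∀ p, u p ≠ X := fun p h => hXu' p (by simp [h])
  have hXvne : ∀ q, v q ≠ X := fun q h => hXv' q (by simp [h])
  refine ⟨fun x => Sum.elim u (fun y => Sum.elim (fun _ => X) v (ofLex y)) (ofLex x),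
    ?_, ?_, ?_⟩
  · rintro (p | (_ | q)) (p' | (_ | q')) h
    · exact congrArg (fun z => toLex (Sum.inl z)) (pc.inj_u h)
    · exact (hXune p h).elim
    · exact (pc.ne p q' h).elim
    · exact (hXune p' h.symm).elim
    · rfl
    · exact (hXvne q' h.symm).elim
    · exact (pc.ne p' q h.symm).elim
    · exact (hXvne q h).elim
    · exact congrArg (fun z => toLex (Sum.inr (toLex (Sum.inr z)))) (pc.inj_v h)
  · rintro (p | (_ | q))
    · exact hu p
    · exact hX
    · exact hv q
  · rintro (p | (_ | q)) (p' | (_ | q'))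
    · exact Sum.Lex.inl_le_inl_iff.trans (pc.iff_u p p')
    · exact iff_of_true (Sum.Lex.inl_le_inr _ _) (hXu p)
    · exact iff_of_true (Sum.Lex.inl_le_inr _ _) (pc.le p q')
    · exact iff_of_false Sum.Lex.not_inr_le_inl (hXu' p')
    · exact iff_of_true le_rfl Finset.Subset.rfl
    · exact iff_of_true (Sum.Lex.inr_le_inr_iff.2 (Sum.Lex.inl_le_inr _ _)) (hXv q')
    · exact iff_of_false Sum.Lex.not_inr_le_inl (pc.nle p' q)
    · exact iff_of_false
        (fun h => Sum.Lex.not_inr_le_inl (Sum.Lex.inr_le_inr_iff.1 h)) (hXv' q)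
    · exact (Sum.Lex.inr_le_inr_iff.trans Sum.Lex.inr_le_inr_iff).trans (pc.iff_v q q')

lemma card_sdiff_lt_card_sdiff {N N' : Finset (Fin n)} (h : N ⊂ N') :
    ((univ : Finset (Fin n)) \ N').card < (univ \ N).card := by
  have h1 := Finset.card_lt_card h
  have h2 : N'.card ≤ n := by simpa using Finset.card_le_card (Finset.subset_univ N')
  rw [Finset.card_sdiff_of_subset (Finset.subset_univ _), Finset.card_sdiff_of_subset (Finset.subset_univ _)]
  simp only [Finset.card_univ, Fintype.card_fin]
  omega

variable [Fintype P1] [Fintype P2]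

/-- Upward recursion: a pair copy whose top part lies entirely in `F` can be upgraded
to a copy of `P1 ⊕ₗ Unit ⊕ₗ P2` inside `insert S F`. -/
lemma copyR_up (h1 : ¬ ∃ m : P1, IsTop m) (h2 : ¬ ∃ m : P2, IsBot m)
    {F : Finset (Finset (Fin n))} {S : Finset (Fin n)}
    (hF : IsSaturatedFamily (P1 ⊕ₗ P2) F) (hS : S ∉ F) :
    ∀ (k : ℕ) (u : P1 → Finset (Fin n)) (v : P2 → Finset (Fin n)), PairCopy u v →
      (∀ p, u p ∈ insert S F) → (∀ q, v q ∈ F) →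
      ((univ : Finset (Fin n)) \ univ.inf v).card < k →
      ContainsCopy (P1 ⊕ₗ Unit ⊕ₗ P2) (insert S F) := by
  intro k
  induction k with
  | zero => intro u v _ _ _ h; omega
  | succ k IH =>
    intro u v pc hu hv hk
    set N := Finset.univ.inf v with hNdef
    have hNsub : ∀ q, N ⊆ v q := fun q => Finset.inf_le (mem_univ q)
    have huN : ∀ p, u p ⊆ N := fun p => Finset.le_inf (fun q _ => pc.le p q)
    by_cases hNmem : N ∈ insert S F
    · exact mid_copy h1 h2 pc (insert S F) hu
        (fun q => mem_insert_of_mem (hv q)) hNmem huN hNsub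
    · have hNF : N ∉ F := fun h => hNmem (mem_insert_of_mem h)
      obtain ⟨u', v', pc', hu', hv'⟩ := pair_of_copyQ _ (hF.2 N hNF)
      by_cases hcu : ∃ p₀, u' p₀ = N
      · obtain ⟨p₀, hp₀⟩ := hcu
        have hv'F : ∀ q, v' q ∈ F := by
          intro q
          rcases Finset.mem_insert.1 (hv' q) with h | h
          · exact absurd (hp₀.trans h.symm) (pc'.ne p₀ q)
          · exact h
        have hNv' : ∀ q, N ⊆ v' q := fun q => hp₀ ▸ pc'.le p₀ q
        have hv'ne : ∀ q, v' q ≠ N := fun q h => hNF (h ▸ hv'F q)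
        have pc2 : PairCopy u v' :=
          { inj_u := pc.inj_u
            inj_v := pc'.inj_v
            ne := fun p q h => hv'ne q
              (Finset.Subset.antisymm (h ▸ huN p) (hNv' q))
            iff_u := pc.iff_u
            iff_v := pc'.iff_v
            le := fun p q => (huN p).trans (hNv' q)
            nle := fun p q h => hv'ne q
              (Finset.Subset.antisymm (h.trans (huN p)) (hNv' q)) }
        have hNN' : N ⊂ Finset.univ.inf v' := by
          rw [Finset.ssubset_def]
          refine ⟨Finset.le_inf fun q _ => hNv' q, fun hc => ?_⟩
          refine h1 ⟨p₀, fun p => (pc'.iff_u p p₀).2 ?_⟩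
          rw [hp₀]
          exact (Finset.le_inf fun q _ => pc'.le p q).trans hc
        have := card_sdiff_lt_card_sdiff hNN'
        exact IH u v' pc2 hu hv'F (by omega)
      · by_cases hcv : ∃ q₀, v' q₀ = N
        · obtain ⟨q₀, hq₀⟩ := hcv
          exfalso
          have hu'F : ∀ p, u' p ∈ F := by
            intro p
            rcases Finset.mem_insert.1 (hu' p) with h | h
            · exact absurd ⟨p, h⟩ hcu
            · exact h
          have hu'N : ∀ p, u' p ⊆ N := fun p => hq₀ ▸ pc'.le p q₀
          have hvne : ∀ q, v q ≠ N := fun q h => hNF (h ▸ hv q)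
          have pc3 : PairCopy u' v :=
            { inj_u := pc'.inj_u
              inj_v := pc.inj_v
              ne := fun p q h => hvne q
                (Finset.Subset.antisymm (h ▸ hu'N p) (hNsub q))
              iff_u := pc'.iff_u
              iff_v := pc.iff_v
              le := fun p q => (hu'N p).trans (hNsub q)
              nle := fun p q h => hvne q
                (Finset.Subset.antisymm (h.trans (hu'N p)) (hNsub q)) }
          exact hF.1 (copyQ_of_pair pc3 F hu'F hv)
        · exfalso
          have hu'F : ∀ p, u' p ∈ F := by
            intro p
            rcases Finset.mem_insert.1 (hu' p) with h | h
            · exact absurd ⟨p, h⟩ hcu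
            · exact h
          have hv'F : ∀ q, v' q ∈ F := by
            intro q
            rcases Finset.mem_insert.1 (hv' q) with h | h
            · exact absurd ⟨q, h⟩ hcv
            · exact h
          exact hF.1 (copyQ_of_pair pc' F hu'F hv'F)

/-- Downward recursion: a pair copy whose bottom part lies entirely in `F` can be
upgraded to a copy of `P1 ⊕ₗ Unit ⊕ₗ P2` inside `insert S F`. -/
lemma copyR_down (h1 : ¬ ∃ m : P1, IsTop m) (h2 : ¬ ∃ m : P2, IsBot m)
    {F : Finset (Finset (Fin n))} {S : Finset (Fin n)}
    (hF : IsSaturatedFamily (P1 ⊕ₗ P2) F) (hS : S ∉ F) :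
    ∀ (k : ℕ) (u : P1 → Finset (Fin n)) (v : P2 → Finset (Fin n)), PairCopy u v →
      (∀ p, u p ∈ F) → (∀ q, v q ∈ insert S F) →
      (Finset.univ.sup u).card < k →
      ContainsCopy (P1 ⊕ₗ Unit ⊕ₗ P2) (insert S F) := by
  intro k
  induction k with
  | zero => intro u v _ _ _ h; omega
  | succ k IH =>
    intro u v pc hu hv hk
    set M := Finset.univ.sup u with hMdef
    have hMsub : ∀ p, u p ⊆ M := fun p => Finset.le_sup (mem_univ p)
    have hMv : ∀ q, M ⊆ v q := fun q => Finset.sup_le (fun p _ => pc.le p q)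
    by_cases hMmem : M ∈ insert S F
    · exact mid_copy h1 h2 pc (insert S F)
        (fun p => mem_insert_of_mem (hu p)) hv hMmem hMsub hMv
    · have hMF : M ∉ F := fun h => hMmem (mem_insert_of_mem h)
      obtain ⟨u', v', pc', hu', hv'⟩ := pair_of_copyQ _ (hF.2 M hMF)
      by_cases hcv : ∃ q₀, v' q₀ = M
      · obtain ⟨q₀, hq₀⟩ := hcv
        have hu'F : ∀ p, u' p ∈ F := by
          intro p
          rcases Finset.mem_insert.1 (hu' p) with h | h
          · exact absurd (h.trans hq₀.symm) (pc'.ne p q₀)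
          · exact h
        have hu'M : ∀ p, u' p ⊆ M := fun p => hq₀ ▸ pc'.le p q₀
        have hu'ne : ∀ p, u' p ≠ M := fun p h => hMF (h ▸ hu'F p)
        have pc2 : PairCopy u' v :=
          { inj_u := pc'.inj_u
            inj_v := pc.inj_v
            ne := fun p q h => hu'ne p
              (Finset.Subset.antisymm (hu'M p) (h ▸ hMv q))
            iff_u := pc'.iff_u
            iff_v := pc.iff_v
            le := fun p q => (hu'M p).trans (hMv q)
            nle := fun p q h => hu'ne p
              (Finset.Subset.antisymm (hu'M p) ((hMv q).trans h)) }
        have hMM' : Finset.univ.sup u' ⊂ M := by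
          rw [Finset.ssubset_def]
          refine ⟨Finset.sup_le fun p _ => hu'M p, fun hc => ?_⟩
          refine h2 ⟨q₀, fun q => (pc'.iff_v q₀ q).2 ?_⟩
          rw [hq₀]
          exact hc.trans (Finset.sup_le fun p _ => pc'.le p q)
        have := Finset.card_lt_card hMM'
        exact IH u' v pc2 hu'F hv (by omega)
      · by_cases hcu : ∃ p₀, u' p₀ = M
        · obtain ⟨p₀, hp₀⟩ := hcu
          exfalso
          have hv'F : ∀ q, v' q ∈ F := by
            intro q
            rcases Finset.mem_insert.1 (hv' q) with h | h
            · exact absurd ⟨q, h⟩ hcv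
            · exact h
          have hMv' : ∀ q, M ⊆ v' q := fun q => hp₀ ▸ pc'.le p₀ q
          have hune : ∀ p, u p ≠ M := fun p h => hMF (h ▸ hu p)
          have pc3 : PairCopy u v' :=
            { inj_u := pc.inj_u
              inj_v := pc'.inj_v
              ne := fun p q h => hune p
                (Finset.Subset.antisymm (hMsub p) (h ▸ hMv' q))
              iff_u := pc.iff_u
              iff_v := pc'.iff_v
              le := fun p q => (hMsub p).trans (hMv' q)
              nle := fun p q h => hune p
                (Finset.Subset.antisymm (hMsub p) ((hMv' q).trans h)) }
          exact hF.1 (copyQ_of_pair pc3 F hu hv'F)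
        · exfalso
          have hu'F : ∀ p, u' p ∈ F := by
            intro p
            rcases Finset.mem_insert.1 (hu' p) with h | h
            · exact absurd ⟨p, h⟩ hcu
            · exact h
          have hv'F : ∀ q, v' q ∈ F := by
            intro q
            rcases Finset.mem_insert.1 (hv' q) with h | h
            · exact absurd ⟨q, h⟩ hcv
            · exact h
          exact hF.1 (copyQ_of_pair pc' F hu'F hv'F)

/-- Main lemma: a `(P1 ⊕ₗ P2)`-saturated family is `(P1 ⊕ₗ Unit ⊕ₗ P2)`-saturated. -/
lemma satR_of_satQ (h1 : ¬ ∃ m : P1, IsTop m) (h2 : ¬ ∃ m : P2, IsBot m)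
    {F : Finset (Finset (Fin n))} (hF : IsSaturatedFamily (P1 ⊕ₗ P2) F) :
    IsSaturatedFamily (P1 ⊕ₗ Unit ⊕ₗ P2) F := by
  constructor
  · intro hc
    exact hF.1 (copyQ_of_copyR _ hc)
  · intro S hS
    obtain ⟨u, v, pc, hu, hv⟩ := pair_of_copyQ _ (hF.2 S hS)
    by_cases hq : ∃ q₀, v q₀ = S
    · have huF : ∀ p, u p ∈ F := by
        intro p
        rcases Finset.mem_insert.1 (hu p) with h | h
        · obtain ⟨q₀, hq₀⟩ := hq
          exact absurd (h.trans hq₀.symm) (pc.ne p q₀)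
        · exact h
      exact copyR_down h1 h2 hF hS _ u v pc huF hv (Nat.lt_succ_self _)
    · have hvF : ∀ q, v q ∈ F := by
        intro q
        rcases Finset.mem_insert.1 (hv q) with h | h
        · exact absurd ⟨q, h⟩ hq
        · exact h
      exact copyR_up h1 h2 hF hS _ u v pc hu hvF (Nat.lt_succ_self _)

end Aux

/-- Every nonempty poset admits a saturated family on any ground set. -/
lemma exists_saturated (α : Type*) [PartialOrder α] [Nonempty α] (n : ℕ) :
    ∃ 𝒜 : Finset (Finset (Fin n)), IsSaturatedFamily α 𝒜 := by
  classical
  have h0 : ¬ ContainsCopy α (∅ : Finset (Finset (Fin n))) := by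
    rintro ⟨f, -, hmem, -⟩
    exact absurd (hmem (Classical.arbitrary α)) (by simp)
  set T : Finset (Finset (Finset (Fin n))) :=
    Finset.univ.filter (fun 𝒜 => ¬ ContainsCopy α 𝒜) with hT
  have hTne : T.Nonempty := ⟨∅, by simp [hT, h0]⟩
  obtain ⟨𝒜, h𝒜T, hmax⟩ := T.exists_max_image Finset.card hTne
  rw [hT, Finset.mem_filter] at h𝒜T
  refine ⟨𝒜, h𝒜T.2, ?_⟩
  intro S hS
  by_contra hc
  have hmem : insert S 𝒜 ∈ T := by
    rw [hT, Finset.mem_filter]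
    exact ⟨Finset.mem_univ _, hc⟩
  have := hmax _ hmem
  rw [Finset.card_insert_of_notMem hS] at this
  omega

/-- If `P1`, `P2` are non-empty finite posets, `P1` has no greatest
element and `P2` has no least element, then `sat*(n, P2 * P1) ≥ sat*(n, P2 * • * P1)` for
every `n`. The linear sums (with `P1` at the bottom) are encoded as `P1 ⊕ₗ P2` and
`P1 ⊕ₗ Unit ⊕ₗ P2`. -/
theorem statement5 (P1 P2 : Type*) [PartialOrder P1] [Fintype P1] [Nonempty P1]
    [PartialOrder P2] [Fintype P2] [Nonempty P2]
    (h1 : ¬ ∃ m : P1, IsTop m) (h2 : ¬ ∃ m : P2, IsBot m) (n : ℕ) :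
    satStar (P1 ⊕ₗ Unit ⊕ₗ P2) n ≤ satStar (P1 ⊕ₗ P2) n := by
  haveI : Nonempty (P1 ⊕ₗ P2) := ⟨toLex (Sum.inl (Classical.arbitrary P1))⟩
  obtain ⟨𝒜, h𝒜⟩ := exists_saturated (P1 ⊕ₗ P2) n
  have hne : {k : ℕ | ∃ ℬ : Finset (Finset (Fin n)),
      IsSaturatedFamily (P1 ⊕ₗ P2) ℬ ∧ ℬ.card = k}.Nonempty := ⟨𝒜.card, 𝒜, h𝒜, rfl⟩
  obtain ⟨ℬ, hℬ, hcard⟩ := Nat.sInf_mem hne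
  calc satStar (P1 ⊕ₗ Unit ⊕ₗ P2) n ≤ ℬ.card :=
        Nat.sInf_le ⟨ℬ, satR_of_satQ h1 h2 hℬ, rfl⟩
    _ = satStar (P1 ⊕ₗ P2) n := hcard
end

section
/- Let P be a finite poset with p elements that has exactly one of the following: a greatest element but no least element, or a least element but no greatest element. Let n ≥ 3p − 1. Then the percolation number satisfies sat_p(n, P) = p. -/
/-!
Say `P` has a top `t` but no bottom; the other case is dual under complementation. No copy of `P`
contains `∅`, so `∅` lies in every percolating family `𝒜`, and the copy completed by the first
added set `A₁` consists of `p` sets of `(𝒜 ∪ {A₁}) \ {∅}`: hence `#𝒜 ≥ p`.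

Conversely, fix an injection `d : P → [n]` and start from `∅` and the sets `d(↓y)`, `y ≠ t`.
Supersets of `d(P)` complete a copy at `t`. A set `S` sticking out of `d(P)` a little, or a
nonempty proper subset of `d(P)`, completes a copy at a minimal element `m`, the other points `y`
going to `c(↓y) ∪ B`, where `c m ∈ S`, the other labels of `c` are fresh, and `B` is `S ∪ d(P)`,
resp. `S`, with `c m` removed. A set sticking out a lot completes a copy at a maximal `x ≠ t`,
with `t ↦ [n]` and the other points going to sets of size at most `p`. Each of these copies uses
only sets added earlier, and `n ≥ 3p - 1` leaves room for the `p - 1` fresh labels.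
-/

open Finset Filter

/-- `𝒜` is a percolating family for `α`: the subsets of `[n]` outside `𝒜` can be ordered
as `A₁, …, A_N` so that, for each `i`, adding `A₁, …, Aᵢ` to `𝒜` creates an induced copy
of `α` containing `Aᵢ`. -/
def IsPercolating (α : Type*) [PartialOrder α] {n : ℕ}
    (𝒜 : Finset (Finset (Fin n))) : Prop :=
  ∃ l : List (Finset (Fin n)), l.Nodup ∧ (∀ S : Finset (Fin n), S ∈ l ↔ S ∉ 𝒜) ∧
    ∀ i : Fin l.length, ∃ f : α → Finset (Fin n),
      IsInducedCopy (𝒜 ∪ (l.take (i + 1)).toFinset) f ∧ ∃ a : α, f a = l.get i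

/-- The percolation number `sat_p(n, α)`: the minimum size of an `α`-percolating family
of subsets of `[n]`. -/
noncomputable def satP (α : Type*) [PartialOrder α] (n : ℕ) : ℕ :=
  sInf {k : ℕ | ∃ 𝒜 : Finset (Finset (Fin n)), IsPercolating α 𝒜 ∧ 𝒜.card = k}

namespace OrderEmbedding

variable {α β : Type*} [PartialOrder α]

def update [PartialOrder β] [DecidableEq α] (g : α ↪o β) (x : α) (b : β)
    (hle : ∀ y ≠ x, g y ≤ b ↔ y ≤ x) (hge : ∀ y ≠ x, b ≤ g y ↔ x ≤ y) : α ↪o β :=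
  ofMapLEIff (Function.update g x b) fun y z => by
    rcases eq_or_ne y x with rfl | hy <;> rcases eq_or_ne z y with rfl | hz
    · simp
    · simp [Function.update_of_ne hz, hge z hz]
    · simp
    · rcases eq_or_ne z x with rfl | hzx
      · simp [Function.update_of_ne hy, hle y hy]
      · simp [Function.update_of_ne hy, Function.update_of_ne hzx]

@[simp]
theorem coe_update [PartialOrder β] [DecidableEq α] (g : α ↪o β) (x : α) (b : β) hle hge :
    ⇑(g.update x b hle hge) = Function.update g x b :=
  rfl

def unionOfDisjoint [DecidableEq β] (g : α ↪o Finset β) (h : α →o Finset β)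
    (hgh : ∀ y z, Disjoint (g y) (h z)) : α ↪o Finset β :=
  ofMapLEIff (fun y => g y ∪ h y) fun y z =>
    ⟨fun hyz => g.le_iff_le.1 ((hgh y z).left_le_of_le_sup_right (subset_union_left.trans hyz)),
      fun hyz => union_subset_union (g.monotone hyz) (h.monotone hyz)⟩

@[simp]
theorem unionOfDisjoint_apply [DecidableEq β] (g : α ↪o Finset β) (h : α →o Finset β) hgh
    (y : α) : g.unionOfDisjoint h hgh y = g y ∪ h y :=
  rfl

theorem exists_update_top_univ [DecidableEq α] [Fintype β] [DecidableEq β] (g : α ↪o Finset β)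
    {t : α} (ht : IsTop t) (hg : ∀ y ≠ t, g y ≠ univ) :
    ∃ e : α ↪o Finset β, e t = univ ∧ ∀ y ≠ t, e y = g y :=
  ⟨g.update t univ (fun y _ => iff_of_true (subset_univ _) (ht y))
    (fun y hy => iff_of_false (fun h => hg y hy (univ_subset_iff.1 h))
      (fun h => hy (le_antisymm (ht y) h))),
    by simp, fun y hy => by simp [Function.update_of_ne hy]⟩

end OrderEmbedding

theorem Function.Embedding.exists_apply_eq_forall_ne_notMem {α β : Type*} [Fintype α]
    [Fintype β] [DecidableEq α] [DecidableEq β] (m : α) {b : β} {U : Finset β} (hb : b ∈ U)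
    (hU : Fintype.card α ≤ #Uᶜ + 1) : ∃ c : α ↪ β, c m = b ∧ ∀ y ≠ m, c y ∉ U := by
  obtain ⟨e⟩ : Nonempty ({y // y ≠ m} ↪ (Uᶜ : Finset β)) :=
    Function.Embedding.nonempty_of_card_le <| by
      rw [Fintype.card_coe, Fintype.card_subtype_compl, Fintype.card_subtype_eq]
      omega
  have heU (y) : (e y : β) ∉ U := mem_compl.1 (e y).2
  let e' := e.trans (Function.Embedding.subtype _)
  have hbe' : b ∉ Set.range e' := fun ⟨y, hy⟩ => heU y ((show (e y : β) = b from hy) ▸ hb)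
  refine ⟨(Equiv.optionSubtypeNe m).symm.toEmbedding.trans (e'.optionElim b hbe'), ?_, ?_⟩
  · simp [Function.Embedding.optionElim]
  · intro y hy
    simpa [Equiv.optionSubtypeNe_symm_of_ne hy, Function.Embedding.optionElim, e']
      using heU ⟨y, hy⟩

section Percolation

variable {α : Type*} [PartialOrder α] {n : ℕ} {𝒜 : Finset (Finset (Fin n))}

theorem OrderEmbedding.isInducedCopy (e : α ↪o Finset (Fin n)) (he : ∀ a, e a ∈ 𝒜) :
    IsInducedCopy 𝒜 e :=
  ⟨e.injective, he, fun _ _ => e.le_iff_le.symm⟩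

theorem IsInducedCopy.ne_empty (hb : ¬∃ m : α, IsBot m) {f : α → Finset (Fin n)}
    (hf : IsInducedCopy 𝒜 f) (a : α) : f a ≠ ∅ := fun ha =>
  hb ⟨a, fun b => (hf.2.2 a b).2 (ha ▸ empty_subset _)⟩

theorem isPercolating_of_rank (r : Finset (Fin n) → ℕ)
    (h : ∀ S ∉ 𝒜, ∃ (e : α ↪o Finset (Fin n)) (a : α), e a = S ∧
      ∀ b ≠ a, e b ∈ 𝒜 ∨ r (e b) < r S) :
    IsPercolating α 𝒜 := by
  classical
  let l := ({S | S ∉ 𝒜} : Finset (Finset (Fin n))).toList.mergeSort (fun S T => r S ≤ r T)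
  have hperm : l.Perm _ := List.mergeSort_perm _ _
  have hsorted : l.Pairwise (fun S T => r S ≤ r T) := by
    simpa using List.pairwise_mergeSort (le := fun S T => decide (r S ≤ r T))
      (fun _ _ _ h₁ h₂ => by simp only [decide_eq_true_eq] at *; omega)
      (fun S T => by simp only [Bool.or_eq_true, decide_eq_true_eq]; omega) _
  refine ⟨l, hperm.nodup_iff.2 (nodup_toList _), fun S => by simp [hperm.mem_iff], fun i => ?_⟩
  obtain ⟨e, a, ha, hrank⟩ := h (l.get i) (by simpa [hperm.mem_iff] using l.get_mem i)
  refine ⟨e, e.isInducedCopy fun b => ?_, a, ha⟩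
  rcases eq_or_ne b a with rfl | hb
  · exact mem_union_right _
      (List.mem_toFinset.2 (ha ▸ List.mem_take_iff_getElem.2 ⟨i, by simp, rfl⟩))
  by_cases h𝒜 : e b ∈ 𝒜
  · exact mem_union_left _ h𝒜
  have hlt := (hrank b hb).resolve_left h𝒜
  obtain ⟨j, hj, hjb⟩ := List.getElem_of_mem (hperm.mem_iff.2 (by simpa using h𝒜))
  have hji : j ≤ i := by
    by_contra! hij
    have := List.pairwise_iff_getElem.1 hsorted i j i.2 hj hij
    simp only [List.get_eq_getElem, ← hjb] at hlt
    omega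
  exact mem_union_right _
    (List.mem_toFinset.2 (List.mem_take_iff_getElem.2 ⟨j, by omega, hjb⟩))

end Percolation

section Duality

variable {α : Type*} [PartialOrder α] {n : ℕ} {𝒜 : Finset (Finset (Fin n))}

theorem IsInducedCopy.image_compl {f : αᵒᵈ → Finset (Fin n)} (hf : IsInducedCopy 𝒜 f) :
    IsInducedCopy (𝒜.image compl) fun a => (f (OrderDual.toDual a))ᶜ :=
  ⟨compl_injective.comp (hf.1.comp OrderDual.toDual.injective),
    fun a => mem_image_of_mem _ (hf.2.1 _), fun a b => by
      rw [compl_subset_compl]; exact hf.2.2 (OrderDual.toDual b) (OrderDual.toDual a)⟩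

theorem IsPercolating.image_compl (h : IsPercolating αᵒᵈ 𝒜) :
    IsPercolating α (𝒜.image compl) := by
  classical
  obtain ⟨l, hnd, hmem, hcopy⟩ := h
  refine ⟨l.map compl, ?_, fun S => ?_, fun i => ?_⟩
  · exact hnd.map compl_injective
  · simp [hmem, compl_eq_comm]
  · obtain ⟨f, hf, a, ha⟩ := hcopy (i.cast (List.length_map _))
    have hfamily : (𝒜 ∪ (l.take (i + 1)).toFinset).image compl =
        𝒜.image compl ∪ ((l.map compl).take (i + 1)).toFinset := by
      ext S
      simp [← List.map_take, compl_eq_comm]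
    refine ⟨fun b => (f (OrderDual.toDual b))ᶜ, hfamily ▸ hf.image_compl, OrderDual.ofDual a, ?_⟩
    simp [ha]

theorem satP_orderDual (n : ℕ) : satP αᵒᵈ n = satP α n := by
  unfold satP
  congr 1
  ext k
  constructor <;> rintro ⟨𝒜, h𝒜, rfl⟩
  · exact ⟨𝒜.image compl, h𝒜.image_compl, card_image_of_injective _ compl_injective⟩
  · exact ⟨𝒜.image compl, IsPercolating.image_compl (α := αᵒᵈ) h𝒜,
      card_image_of_injective _ compl_injective⟩

end Duality

section LowerBound

variable {α : Type*} [PartialOrder α] [Fintype α] {n : ℕ} {𝒜 : Finset (Finset (Fin n))}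

theorem IsPercolating.card_le (hb : ¬∃ m : α, IsBot m) (hα : Fintype.card α ≤ 2 ^ n)
    (h : IsPercolating α 𝒜) : Fintype.card α ≤ #𝒜 := by
  classical
  obtain ⟨l, -, hmem, hcopy⟩ := h
  have hempty : ∅ ∈ 𝒜 := by
    by_contra hempty
    obtain ⟨i, hi⟩ := List.mem_iff_get.1 ((hmem ∅).2 hempty)
    obtain ⟨f, hf, a, ha⟩ := hcopy i
    exact hf.ne_empty hb a (ha.trans hi)
  cases l with
  | nil =>
    have h𝒜 : 𝒜 = univ := eq_univ_of_forall fun S => by simpa using hmem S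
    simpa [h𝒜] using hα
  | cons A l =>
    obtain ⟨f, hf, -⟩ := hcopy ⟨0, by simp⟩
    have hsub : univ.image f ⊆ (insert A 𝒜).erase ∅ := by
      intro S hS
      obtain ⟨a, -, rfl⟩ := mem_image.1 hS
      simpa [hf.ne_empty hb a, or_comm] using hf.2.1 a
    calc Fintype.card α = #(univ.image f) := (card_image_of_injective _ hf.1).symm
      _ ≤ #((insert A 𝒜).erase ∅) := card_le_card hsub
      _ ≤ #𝒜 := by
        rw [card_erase_of_mem (mem_insert_of_mem hempty)]
        have := card_insert_le A 𝒜
        omega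

end LowerBound

theorem satP_eq_of_isPercolating {α : Type*} [PartialOrder α] {n : ℕ}
    {𝒜 : Finset (Finset (Fin n))} (h𝒜 : IsPercolating α 𝒜)
    (hmin : ∀ ℬ : Finset (Finset (Fin n)), IsPercolating α ℬ → #𝒜 ≤ #ℬ) :
    satP α n = #𝒜 :=
  le_antisymm (Nat.sInf_le ⟨𝒜, h𝒜, rfl⟩)
    (le_csInf ⟨_, 𝒜, h𝒜, rfl⟩ fun _ ⟨ℬ, hℬ, hk⟩ => hk ▸ hmin ℬ hℬ)

section SingletonIfNotLE

variable {P β : Type*} [PartialOrder P] [DecidableLE P]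

def singletonIfNotLE (x : P) (r : β) : P →o Finset β where
  toFun y := if y ≤ x then ∅ else {r}
  monotone' y z hyz := by
    dsimp only
    split_ifs with hy hz
    exacts [subset_rfl, empty_subset _, absurd (hyz.trans ‹_›) hy, subset_rfl]

@[simp]
theorem singletonIfNotLE_apply (x : P) (r : β) (y : P) :
    singletonIfNotLE x r y = if y ≤ x then ∅ else {r} :=
  rfl

end SingletonIfNotLE

section LowerImage

variable {P : Type*} [PartialOrder P] [Fintype P] [DecidableLE P] {n : ℕ}

def lowerImage (c : P ↪ Fin n) : P ↪o Finset (Fin n) :=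
  OrderEmbedding.ofMapLEIff (fun y => ({z | z ≤ y} : Finset P).map c) fun y z => by
    rw [map_subset_map]
    exact ⟨fun h => by simpa using h (by simp : y ∈ ({z | z ≤ y} : Finset P)),
      fun h w hw => by simp only [mem_filter, mem_univ, true_and] at hw ⊢; exact hw.trans h⟩

theorem mem_lowerImage {c : P ↪ Fin n} {y z : P} : c z ∈ lowerImage c y ↔ z ≤ y := by
  simp [lowerImage]

theorem lowerImage_subset_map (c : P ↪ Fin n) (y : P) : lowerImage c y ⊆ univ.map c := by
  simp [lowerImage]

theorem card_lowerImage_lt {t : P} (ht : IsTop t) (c : P ↪ Fin n) {y : P} (hy : y ≠ t) :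
    #(lowerImage c y) < Fintype.card P := by
  simp only [lowerImage, OrderEmbedding.coe_ofMapLEIff, card_map]
  exact card_lt_univ_of_notMem (x := t) (by simpa using fun h => hy (le_antisymm (ht y) h))

theorem card_lowerImage_union_le {t : P} (ht : IsTop t) (c : P ↪ Fin n) {y : P} (hy : y ≠ t)
    {R : Finset (Fin n)} (hR : #R ≤ 1) : #(lowerImage c y ∪ R) ≤ Fintype.card P :=
  (card_union_le _ _).trans (by have := card_lowerImage_lt ht c hy; omega)

end LowerImage

section Copies

variable {P : Type*} [PartialOrder P] [Fintype P] [DecidableLE P] [DecidableEq P] {n : ℕ}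

theorem exists_orderEmbedding_top_eq {t : P} (ht : IsTop t) (c : P ↪ Fin n)
    {S : Finset (Fin n)} (hS : univ.map c ⊆ S) :
    ∃ e : P ↪o Finset (Fin n), e t = S ∧ ∀ y ≠ t, e y = lowerImage c y := by
  refine ⟨(lowerImage c).update t S (fun y _ => ?_) (fun y hy => ?_), by simp, fun y hy => by
    simp [Function.update_of_ne hy]⟩
  · exact iff_of_true ((lowerImage_subset_map c y).trans hS) (ht y)
  · refine iff_of_false (fun h => hy ?_) (fun h => hy (le_antisymm (ht y) h))
    exact le_antisymm (ht y) (mem_lowerImage.1 (h (hS (mem_map_of_mem c (mem_univ t)))))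

theorem exists_orderEmbedding_isMin_eq {m : P} (hm : IsMin m) (c : P ↪ Fin n)
    {A B : Finset (Fin n)} (hcB : ∀ y, c y ∉ B) (hcA : ∀ y ≠ m, c y ∉ A) (hmA : c m ∈ A)
    (hAB : A.erase (c m) ⊆ B) :
    ∃ e : P ↪o Finset (Fin n), e m = A ∧ ∀ y ≠ m, e y = lowerImage c y ∪ B := by
  let g := (lowerImage c).unionOfDisjoint (OrderHom.const P B) fun y z =>
    disjoint_left.2 fun a ha haB => by
      obtain ⟨w, -, rfl⟩ := mem_map.1 (lowerImage_subset_map c y ha)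
      exact hcB w haB
  refine ⟨g.update m A (fun y hy => ?_) (fun y hy => ?_), by simp, fun y hy => by
    simp [Function.update_of_ne hy, g]⟩
  · refine iff_of_false (fun h => hcA y hy ?_) (fun h => hy (le_antisymm h (hm h)))
    exact h (mem_union_left _ (mem_lowerImage.2 le_rfl))
  · simp only [g, OrderEmbedding.unionOfDisjoint_apply, OrderHom.const_coe_coe,
      Function.const_apply]
    refine ⟨fun h => ?_, fun h a ha => ?_⟩
    · simpa [mem_lowerImage, hcB] using h hmA
    · rcases eq_or_ne a (c m) with rfl | ham
      · exact mem_union_left _ (mem_lowerImage.2 h)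
      · exact mem_union_right _ (hAB (mem_erase.2 ⟨ham, ha⟩))

theorem exists_orderEmbedding_coatom_eq {t x : P} (ht : IsTop t) (hxt : x ≠ t)
    (hx : ∀ y, x < y → y = t) (c : P ↪ Fin n) {S : Finset (Fin n)} {r : Fin n}
    (hcS : ∀ y, c y ∈ S) (hr : r ∉ S) (hS : Fintype.card P < #S) :
    ∃ e : P ↪o Finset (Fin n), e x = S ∧ e t = univ ∧
      ∀ y ≠ x, y ≠ t → e y = lowerImage c y ∪ if y ≤ x then ∅ else {r} := by
  let h := singletonIfNotLE x r
  have hR (y) : #(h y) ≤ 1 := by simp only [h, singletonIfNotLE_apply]; split_ifs <;> simp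
  let g := (lowerImage c).unionOfDisjoint h fun y z => disjoint_left.2 fun a ha har => by
    obtain ⟨w, -, rfl⟩ := mem_map.1 (lowerImage_subset_map c y ha)
    simp only [h, singletonIfNotLE_apply] at har
    split_ifs at har
    · exact notMem_empty _ har
    · exact hr (mem_singleton.1 har ▸ hcS w)
  have hg (y) (hy : y ≠ t) : #(g y) ≤ Fintype.card P := card_lowerImage_union_le ht c hy (hR y)
  have hSn : #S ≤ n := by simpa using card_le_univ S
  obtain ⟨g', hg't, hg'⟩ := g.exists_update_top_univ ht fun y hy h' => by
    have := hg y hy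
    rw [h', card_univ, Fintype.card_fin] at this
    omega
  refine ⟨g'.update x S (fun y hyx => ?_) (fun y hyx => ?_), by simp, ?_, fun y hyx hyt => ?_⟩
  · rcases eq_or_ne y t with rfl | hyt
    · rw [hg't]
      exact iff_of_false (fun h' => hr (h' (mem_univ r))) (fun h' => hxt (le_antisymm (ht x) h'))
    · rw [hg' y hyt]
      refine ⟨fun h' => ?_, fun h' => union_subset ?_ ?_⟩
      · by_contra hyx'
        exact hr (h' (mem_union_right _ (by simp [h, hyx'])))
      · exact (lowerImage_subset_map c y).trans fun a ha => by
          obtain ⟨w, -, rfl⟩ := mem_map.1 ha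
          exact hcS w
      · simp [h, h']
  · rcases eq_or_ne y t with rfl | hyt
    · rw [hg't]
      exact iff_of_true (subset_univ S) (ht x)
    · refine iff_of_false (fun h' => ?_) (fun h' => hyt (hx y (lt_of_le_of_ne h' hyx.symm)))
      have := (card_le_card h').trans (hg' y hyt ▸ hg y hyt)
      omega
  · simpa [Function.update_of_ne hxt.symm] using hg't
  · simpa [Function.update_of_ne hyx, g, h] using hg' y hyt

end Copies

section Stages

variable {P : Type*} [Fintype P] {n : ℕ}

/-- A copy completing a set of stage `k` uses, besides that set, only sets of the seed family
(`k = 0`), supersets of `d(P)` (`k = 1`), sets of stage `1` (`k = 2`), or `[n]` and sets of size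
at most `|P|` (`k = 3`). -/
def stage (d : P ↪ Fin n) (S : Finset (Fin n)) : ℕ :=
  if univ.map d ⊆ S then 0
  else if S ⊆ univ.map d then 2
  else if #(S \ univ.map d) + 2 * Fintype.card P ≤ n + 1 then 1 else 3

theorem stage_lt_three (d : P ↪ Fin n) (hn : 3 * Fintype.card P ≤ n + 1) {S : Finset (Fin n)}
    (hS : #S ≤ Fintype.card P) : stage d S < 3 := by
  have := card_le_card (sdiff_subset (s := S) (t := univ.map d))
  unfold stage
  split_ifs <;> omega

end Stages

section SeedFamily

variable {P : Type*} [PartialOrder P] [Fintype P] [DecidableLE P] [DecidableEq P] {n : ℕ}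

def seedFamily (t : P) (d : P ↪ Fin n) : Finset (Finset (Fin n)) :=
  insert ∅ ((univ.erase t).image (lowerImage d))

theorem card_seedFamily (t : P) (d : P ↪ Fin n) : #(seedFamily t d) = Fintype.card P := by
  have hempty : ∅ ∉ (univ.erase t).image (lowerImage d) := by
    simp only [mem_image, not_exists, not_and]
    exact fun y _ h => by simpa [h] using (mem_lowerImage (c := d)).2 (le_refl y)
  rw [seedFamily, card_insert_of_notMem hempty,
    card_image_of_injective _ (lowerImage d).injective, card_erase_of_mem (mem_univ t), card_univ]
  have := Fintype.card_pos_iff.2 ⟨t⟩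
  omega

end SeedFamily

section Phases

variable {P : Type*} [PartialOrder P] [Fintype P] [DecidableLE P] [DecidableEq P] {n : ℕ}
  {t : P} (d : P ↪ Fin n) {S : Finset (Fin n)}

theorem exists_copy_of_stage_zero (ht : IsTop t) (hS : univ.map d ⊆ S) :
    ∃ (e : P ↪o Finset (Fin n)) (a : P), e a = S ∧
      ∀ b ≠ a, e b ∈ seedFamily t d ∨ stage d (e b) < stage d S := by
  obtain ⟨e, het, he⟩ := exists_orderEmbedding_top_eq ht d hS
  refine ⟨e, t, het, fun b hb => .inl ?_⟩
  rw [he b hb]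
  exact mem_insert_of_mem (mem_image_of_mem _ (mem_erase.2 ⟨hb, mem_univ b⟩))

theorem exists_copy_of_stage_one {m : P} (hm : IsMin m) (hTS : ¬univ.map d ⊆ S)
    (hST : ¬S ⊆ univ.map d) (hS : #(S \ univ.map d) + 2 * Fintype.card P ≤ n + 1) :
    ∃ (e : P ↪o Finset (Fin n)) (a : P), e a = S ∧
      ∀ b ≠ a, e b ∈ seedFamily t d ∨ stage d (e b) < stage d S := by
  obtain ⟨a, haS, haT⟩ := not_subset.1 hST
  have hU : #(S ∪ univ.map d) = #(S \ univ.map d) + Fintype.card P := by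
    rw [← card_sdiff_add_card, card_map, card_univ]
  obtain ⟨c, hcm, hc⟩ := Function.Embedding.exists_apply_eq_forall_ne_notMem m
    (mem_union_left _ haS) (by rw [card_compl, Fintype.card_fin, hU]; omega)
  obtain ⟨e, hem, he⟩ := exists_orderEmbedding_isMin_eq hm c (B := (S ∪ univ.map d).erase a)
    (fun y hy => by
      rcases eq_or_ne y m with rfl | hym
      · exact notMem_erase _ _ (hcm ▸ hy)
      · exact hc y hym (mem_of_mem_erase hy))
    (fun y hym hy => hc y hym (mem_union_left _ hy)) (hcm ▸ haS)
    (hcm ▸ erase_subset_erase _ subset_union_left)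
  refine ⟨e, m, hem, fun b hb => .inr ?_⟩
  have hTe : univ.map d ⊆ e b := by
    rw [he b hb]
    exact fun u hu =>
      mem_union_right _ (mem_erase.2 ⟨fun h => haT (h ▸ hu), mem_union_right _ hu⟩)
  simp [stage, hTe, hTS, hST, hS]

theorem exists_copy_of_stage_two {m : P} (hm : IsMin m) (hn : 3 * Fintype.card P ≤ n + 1)
    (hST : S ⊆ univ.map d) (hTS : ¬univ.map d ⊆ S) (hS : S.Nonempty) :
    ∃ (e : P ↪o Finset (Fin n)) (a : P), e a = S ∧
      ∀ b ≠ a, e b ∈ seedFamily t d ∨ stage d (e b) < stage d S := by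
  obtain ⟨a, haS⟩ := hS
  obtain ⟨u, huT, huS⟩ := not_subset.1 hTS
  obtain ⟨c, hcm, hc⟩ := Function.Embedding.exists_apply_eq_forall_ne_notMem m (hST haS)
    (by rw [card_compl, Fintype.card_fin, card_map, card_univ]; omega)
  obtain ⟨e, hem, he⟩ := exists_orderEmbedding_isMin_eq hm c (B := S.erase a)
    (fun y hy => by
      rcases eq_or_ne y m with rfl | hym
      · exact notMem_erase _ _ (hcm ▸ hy)
      · exact hc y hym (hST (mem_of_mem_erase hy)))
    (fun y hym hy => hc y hym (hST hy)) (hcm ▸ haS) (hcm ▸ subset_rfl)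
  refine ⟨e, m, hem, fun b hb => .inr ?_⟩
  rw [he b hb]
  have hTb : ¬univ.map d ⊆ lowerImage c b ∪ S.erase a := fun h => by
    rcases mem_union.1 (h huT) with hu | hu
    · obtain ⟨z, -, rfl⟩ := mem_map.1 (lowerImage_subset_map c b hu)
      rcases eq_or_ne z m with rfl | hzm
      · exact huS (hcm ▸ haS)
      · exact hc z hzm huT
    · exact huS (mem_of_mem_erase hu)
  have hbT : ¬lowerImage c b ∪ S.erase a ⊆ univ.map d := fun h =>
    hc b hb (h (mem_union_left _ (mem_lowerImage.2 le_rfl)))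
  have hcard : #((lowerImage c b ∪ S.erase a) \ univ.map d) ≤ Fintype.card P - 1 := by
    calc _ ≤ #((univ.erase m).map c) := card_le_card fun v hv => by
          obtain ⟨hv, hvT⟩ := mem_sdiff.1 hv
          rcases mem_union.1 hv with hv | hv
          · obtain ⟨z, -, rfl⟩ := mem_map.1 (lowerImage_subset_map c b hv)
            refine mem_map_of_mem c (mem_erase.2 ⟨fun hzm => hvT ?_, mem_univ z⟩)
            exact hzm ▸ hcm ▸ hST haS
          · exact absurd (hST (mem_of_mem_erase hv)) hvT
      _ = Fintype.card P - 1 := by simp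
  have : stage d (lowerImage c b ∪ S.erase a) = 1 := by
    simp only [stage, if_neg hTb, if_neg hbT]
    rw [if_pos]
    omega
  rw [this]
  simp [stage, hST, hTS]

theorem exists_copy_of_stage_three [Nontrivial P] (ht : IsTop t)
    (hn : 3 * Fintype.card P ≤ n + 1) (hTS : ¬univ.map d ⊆ S) (hST : ¬S ⊆ univ.map d)
    (hS : n + 1 < #(S \ univ.map d) + 2 * Fintype.card P) :
    ∃ (e : P ↪o Finset (Fin n)) (a : P), e a = S ∧
      ∀ b ≠ a, e b ∈ seedFamily t d ∨ stage d (e b) < stage d S := by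
  obtain ⟨w, hw⟩ := exists_ne t
  obtain ⟨x, hxmem, hxmax⟩ := (univ.erase t).exists_maximal ⟨w, mem_erase.2 ⟨hw, mem_univ w⟩⟩
  have hxt : x ≠ t := ne_of_mem_erase hxmem
  have hx (y) (hxy : x < y) : y = t := by
    by_contra hyt
    exact hxy.not_ge (hxmax (mem_erase.2 ⟨hyt, mem_univ y⟩) hxy.le)
  have hpS : Fintype.card P < #S := by
    have := card_le_card (sdiff_subset (s := S) (t := univ.map d))
    omega
  obtain ⟨c⟩ : Nonempty (P ↪ S) :=
    Function.Embedding.nonempty_of_card_le (by simpa using hpS.le)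
  obtain ⟨r, -, hrS⟩ := not_subset.1 hTS
  obtain ⟨e, hex, het, he⟩ := exists_orderEmbedding_coatom_eq ht hxt hx
    (c.trans (Function.Embedding.subtype _)) (fun y => (c y).2) hrS hpS
  have hstage : stage d S = 3 := by simp [stage, hTS, hST, hS.not_ge]
  refine ⟨e, x, hex, fun b hb => .inr ?_⟩
  rw [hstage]
  rcases eq_or_ne b t with rfl | hbt
  · simp [het, stage]
  · rw [he b hb hbt]
    exact stage_lt_three d hn (card_lowerImage_union_le ht _ hbt (by split_ifs <;> simp))

end Phases

section Main

variable {P : Type*} [PartialOrder P] [Fintype P] {n : ℕ}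

theorem exists_isPercolating_card_eq [Nontrivial P] {t : P} (ht : IsTop t)
    (hn : 3 * Fintype.card P ≤ n + 1) :
    ∃ 𝒜 : Finset (Finset (Fin n)), IsPercolating P 𝒜 ∧ #𝒜 = Fintype.card P := by
  classical
  obtain ⟨d⟩ : Nonempty (P ↪ Fin n) :=
    Function.Embedding.nonempty_of_card_le (by rw [Fintype.card_fin]; omega)
  obtain ⟨m, hm⟩ := exists_minimal_of_wellFoundedLT (fun _ : P => True) ⟨t, trivial⟩
  rw [minimal_true] at hm
  refine ⟨seedFamily t d, isPercolating_of_rank (stage d) fun S hS => ?_, card_seedFamily t d⟩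
  by_cases hTS : univ.map d ⊆ S
  · exact exists_copy_of_stage_zero d ht hTS
  by_cases hST : S ⊆ univ.map d
  · refine exists_copy_of_stage_two d hm hn hST hTS (nonempty_iff_ne_empty.2 ?_)
    rintro rfl
    exact hS (mem_insert_self _ _)
  by_cases hsmall : #(S \ univ.map d) + 2 * Fintype.card P ≤ n + 1
  · exact exists_copy_of_stage_one d hm hTS hST hsmall
  · exact exists_copy_of_stage_three d ht hn hTS hST (by omega)

theorem satP_eq_card_of_isTop {t : P} (ht : IsTop t) (hb : ¬∃ m : P, IsBot m)
    (hn : 3 * Fintype.card P ≤ n + 1) : satP P n = Fintype.card P := by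
  obtain ⟨w, hw⟩ : ∃ w, ¬t ≤ w := by simpa [IsBot] using fun h => hb ⟨t, h⟩
  have : Nontrivial P := nontrivial_of_ne t w (by rintro rfl; exact hw le_rfl)
  obtain ⟨𝒜, h𝒜, hcard⟩ := exists_isPercolating_card_eq ht hn
  rw [← hcard]
  refine satP_eq_of_isPercolating h𝒜 fun ℬ hℬ => hcard ▸ hℬ.card_le hb ?_
  have := n.lt_two_pow_self
  omega

end Main

/-- If `P` is a finite poset with `p` elements having exactly one of a
greatest element and a least element, and `n ≥ 3p - 1`, then `sat_p(n, P) = p`. -/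
theorem statement16 (P : Type*) [PartialOrder P] [Fintype P]
    (h : Xor' (∃ m : P, IsTop m) (∃ m : P, IsBot m))
    (n : ℕ) (hn : 3 * Fintype.card P - 1 ≤ n) :
    satP P n = Fintype.card P := by
  have hn' : 3 * Fintype.card P ≤ n + 1 := by omega
  rcases h with ⟨⟨t, ht⟩, hb⟩ | ⟨⟨b, hb⟩, ht⟩
  · exact satP_eq_card_of_isTop ht hb hn'
  · rw [← satP_orderDual]
    exact satP_eq_card_of_isTop (P := Pᵒᵈ) hb.toDual (fun ⟨m, hm⟩ => ht ⟨m.ofDual, hm⟩) hn'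
end
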